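/- Let N ≥ 1 be an integer, p a real parameter, and let d, n be integers with d > N, n ≥ 0, and n ≠ d. Then, as an identity of real polynomials in x, K̂_n^{(1,d)}(x;p,N) = (x−N+1)_N · K̂_n^{(2,d−N−1)}(x;p,N), where (x−N+1)_N = (x−N+1)(x−N+2)⋯x. -/
import Mathlib


open Polynomial

/-- Pochhammer symbol `(c)_k = c (c+1) ⋯ (c+k−1)`. -/
noncomputable def poch (c : ℝ) (k : ℕ) : ℝ := ∏ i ∈ Finset.range k, (c + i)

/-- The monic Krawtchouk polynomial
`K_n(x;p,a) = Σ_{j=0}^{n} ((−n)_j (−a+j)_{n−j} / j!) p^{n−j} (−x)_j`,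
where `(−x)_j = Π_{i=0}^{j−1} (i − x)` as a polynomial in `x`. -/
noncomputable def kraw (n : ℕ) (p a : ℝ) : Polynomial ℝ :=
  ∑ j ∈ Finset.range (n + 1),
    Polynomial.C (poch (-(n : ℝ)) j * poch (-a + j) (n - j) / (Nat.factorial j) * p ^ (n - j)) *
      ∏ i ∈ Finset.range j, (Polynomial.C (i : ℝ) - Polynomial.X)

/-- The type-1 exceptional Krawtchouk polynomial
`K̂_n^{(1,d)}(x;p,N) = (K_d(x;p,N) K_n(x+1;p,N) − K_d(x+1;p,N) K_n(x;p,N))/(n−d)`. -/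
noncomputable def xkraw1 (d n : ℕ) (p N : ℝ) : Polynomial ℝ :=
  Polynomial.C (1 / ((n : ℝ) - (d : ℝ))) *
    (kraw d p N * (kraw n p N).comp (Polynomial.X + 1) -
      (kraw d p N).comp (Polynomial.X + 1) * kraw n p N)

/-- The type-2 exceptional Krawtchouk polynomial
`K̂_n^{(2,d)}(x;p,M) = [(M−x) K_d(x−M−1;p,−M−2) K_n(x+1;p,M)
  + (x+1) K_d(x−M;p,−M−2) K_n(x;p,M)]/(M+d+1−n)`. -/
noncomputable def xkraw2 (d n : ℕ) (p M : ℝ) : Polynomial ℝ :=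
  Polynomial.C (1 / (M + (d : ℝ) + 1 - (n : ℝ))) *
    ((Polynomial.C M - Polynomial.X) *
        (kraw d p (-M - 2)).comp (Polynomial.X - Polynomial.C (M + 1)) *
        (kraw n p M).comp (Polynomial.X + 1) +
      (Polynomial.X + 1) * (kraw d p (-M - 2)).comp (Polynomial.X - Polynomial.C M) *
        kraw n p M)

lemma poch_succ (c : ℝ) (k : ℕ) : poch c (k+1) = poch c k * (c + k) :=
  Finset.prod_range_succ _ _

lemma poch_zero (c : ℝ) : poch c 0 = 1 := rfl

lemma pochA (d : ℕ) : ∀ j, j ≤ d → poch (-(d:ℝ)) j * (Nat.factorial (d - j) : ℝ) = (-1)^j * (Nat.factorial d : ℝ) := by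
  intro j
  induction j with
  | zero => simp [poch_zero]
  | succ j ih =>
    intro hj
    have hj' : j ≤ d := by omega
    have h1 := ih hj'
    have hsub : d - j = (d - (j+1)) + 1 := by omega
    rw [poch_succ]
    have hc : -(d:ℝ) + j = -((d - j : ℕ) : ℝ) := by
      have : ((d - j : ℕ) : ℝ) = (d:ℝ) - j := by
        push_cast [Nat.cast_sub hj']; ring
      rw [this]; ring
    rw [hc]
    have hfac : ((Nat.factorial (d - j)) : ℝ) = ((d - j : ℕ) : ℝ) * (Nat.factorial (d - (j+1)) : ℝ) := by
      rw [hsub, Nat.factorial_succ]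
      push_cast [Nat.cast_sub (by omega : j + 1 ≤ d)]
      ring
    rw [hfac] at h1
    calc poch (-(d:ℝ)) j * -((d - j : ℕ):ℝ) * (Nat.factorial (d - (j+1)) : ℝ)
        = -(poch (-(d:ℝ)) j * (((d - j : ℕ):ℝ) * (Nat.factorial (d - (j+1)) : ℝ))) := by ring
      _ = -((-1)^j * (Nat.factorial d : ℝ)) := by rw [← h1]
      _ = (-1)^(j+1) * (Nat.factorial d : ℝ) := by ring

lemma pochB (a : ℕ) : ∀ k, poch ((a:ℝ)+1) k * (Nat.factorial a : ℝ) = (Nat.factorial (a+k) : ℝ) := by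
  intro k
  induction k with
  | zero => simp [poch_zero]
  | succ k ih =>
    rw [poch_succ]
    have : (a + (k+1)) = (a + k) + 1 := by omega
    rw [this, Nat.factorial_succ]
    push_cast
    calc poch ((a:ℝ)+1) k * ((a:ℝ) + 1 + k) * (Nat.factorial a : ℝ)
        = (poch ((a:ℝ)+1) k * (Nat.factorial a : ℝ)) * ((a:ℝ) + 1 + k) := by ring
      _ = (Nat.factorial (a+k) : ℝ) * ((a:ℝ)+1+k) := by rw [ih]
      _ = ((a:ℝ) + k + 1) * (Nat.factorial (a+k) : ℝ) := by ring

lemma pochZero (N d j : ℕ) (hj : j ≤ N) (hd : N < d) : poch (-(N:ℝ) + j) (d - j) = 0 := by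
  apply Finset.prod_eq_zero (i := N - j)
  · simp only [Finset.mem_range]; omega
  · push_cast [Nat.cast_sub hj]; ring

lemma coef_eq (N m k : ℕ) (hk : k ≤ m) (p : ℝ) :
    poch (-((N+1+m : ℕ):ℝ)) (N+1+k) * poch (-(N:ℝ) + ((N+1+k : ℕ):ℝ)) ((N+1+m) - (N+1+k)) /
        (Nat.factorial (N+1+k) : ℝ) * p ^ ((N+1+m) - (N+1+k)) * (-1:ℝ)^(N+1)
    = poch (-(m:ℝ)) k * poch (-(-(N:ℝ)-2) + (k:ℝ)) (m - k) / (Nat.factorial k : ℝ) * p ^ (m-k) := by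
  have hsub : (N+1+m) - (N+1+k) = m - k := by omega
  rw [hsub]
  have hmk : (m - k) + k = m := by omega
  have f1 : (0:ℝ) < Nat.factorial (m-k) := by exact_mod_cast Nat.factorial_pos _
  have f2 : (0:ℝ) < Nat.factorial k := by exact_mod_cast Nat.factorial_pos _
  have f3 : (0:ℝ) < Nat.factorial (N+1+k) := by exact_mod_cast Nat.factorial_pos _
  -- poch values
  have hA1 : poch (-((N+1+m : ℕ):ℝ)) (N+1+k)
      = (-1)^(N+1+k) * (Nat.factorial (N+1+m) : ℝ) / (Nat.factorial (m-k) : ℝ) := by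
    have := pochA (N+1+m) (N+1+k) (by omega)
    have hh : (N+1+m) - (N+1+k) = m - k := by omega
    rw [hh] at this
    rw [eq_div_iff (ne_of_gt f1)]
    exact this
  have hA2 : poch (-(m:ℝ)) k = (-1)^k * (Nat.factorial m : ℝ) / (Nat.factorial (m-k) : ℝ) := by
    have := pochA m k hk
    rw [eq_div_iff (ne_of_gt f1)]
    exact this
  have hB1 : poch (-(N:ℝ) + ((N+1+k : ℕ):ℝ)) (m-k)
      = (Nat.factorial m : ℝ) / (Nat.factorial k : ℝ) := by
    have harg : -(N:ℝ) + ((N+1+k : ℕ):ℝ) = (k:ℝ) + 1 := by push_cast; ring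
    have := pochB k (m-k)
    rw [harg]
    rw [show k + (m-k) = m by omega] at this
    rw [eq_div_iff (ne_of_gt f2)]
    exact this
  have hB2 : poch (-(-(N:ℝ)-2) + (k:ℝ)) (m-k)
      = (Nat.factorial (N+1+m) : ℝ) / (Nat.factorial (N+1+k) : ℝ) := by
    have harg : -(-(N:ℝ)-2) + (k:ℝ) = ((N+1+k : ℕ):ℝ) + 1 := by push_cast; ring
    have := pochB (N+1+k) (m-k)
    rw [harg]
    rw [show (N+1+k) + (m-k) = N+1+m by omega] at this
    rw [eq_div_iff (ne_of_gt f3)]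
    exact this
  rw [hA1, hA2, hB1, hB2]
  field_simp
  ring_nf
  rw [show N*2 = 2*N by ring, pow_mul]
  norm_num



lemma prod_sign (k : ℕ) : ∏ i ∈ Finset.range k, (C (i:ℝ) - X)
    = (-1 : Polynomial ℝ)^k * ∏ i ∈ Finset.range k, (X - C (i:ℝ)) := by
  induction k with
  | zero => simp
  | succ k ih => rw [Finset.prod_range_succ, Finset.prod_range_succ, ih]; ring

lemma prod_comp_shift (N k : ℕ) :
    (∏ i ∈ Finset.range k, (C (i:ℝ) - X)).comp (X - C ((N:ℝ) + 1))
      = ∏ i ∈ Finset.range k, (C ((N + 1 + i : ℕ):ℝ) - X) := by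
  rw [Polynomial.prod_comp]
  apply Finset.prod_congr rfl
  intro i _
  simp only [sub_comp, C_comp, X_comp, Nat.cast_add, Nat.cast_one, C_add, C_1]
  ring

lemma kraw_factor (N m : ℕ) (p : ℝ) :
    kraw (N+1+m) p (N:ℝ) =
      (∏ i ∈ Finset.range (N+1), (X - C (i:ℝ))) *
        (kraw m p (-(N:ℝ)-2)).comp (X - C ((N:ℝ)+1)) := by
  unfold kraw
  rw [Polynomial.sum_comp, Finset.mul_sum]
  rw [show (N+1+m)+1 = (N+1) + (m+1) by omega, Finset.sum_range_add]
  have hz : ∀ j ∈ Finset.range (N+1),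
      C (poch (-((N+1+m : ℕ):ℝ)) j * poch (-(N:ℝ) + j) ((N+1+m) - j) / (Nat.factorial j) * p ^ ((N+1+m) - j)) *
        ∏ i ∈ Finset.range j, (C (i:ℝ) - X) = 0 := by
    intro j hj
    rw [Finset.mem_range] at hj
    rw [pochZero N (N+1+m) j (by omega) (by omega)]
    simp
  rw [Finset.sum_eq_zero hz, zero_add]
  apply Finset.sum_congr rfl
  intro k hk
  rw [Finset.mem_range] at hk
  rw [mul_comp, C_comp, prod_comp_shift N k]
  rw [Finset.prod_range_add, prod_sign (N+1)]
  have hC : ∀ c : ℝ, (C c : Polynomial ℝ) * ((-1 : Polynomial ℝ)^(N+1)) = C (c * (-1:ℝ)^(N+1)) := by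
    intro c
    rw [map_mul, map_pow, map_neg, map_one]
  have hcoef := coef_eq N m k (by omega) p
  have key : C (poch (-((N+1+m:ℕ):ℝ)) (N+1+k) * poch (-(N:ℝ) + ((N+1+k:ℕ):ℝ)) ((N+1+m) - (N+1+k)) / ((N+1+k).factorial : ℝ) * p ^ ((N+1+m) - (N+1+k))) * (-1 : Polynomial ℝ)^(N+1)
      = C (poch (-(m:ℝ)) k * poch (-(-(N:ℝ)-2) + (k:ℝ)) (m - k) / ((k).factorial : ℝ) * p ^ (m-k)) := by
    rw [hC]; exact congrArg C hcoef
  linear_combination key * ((∏ i ∈ Finset.range (N+1), (X - C (i:ℝ))) * ∏ i ∈ Finset.range k, (C ((N+1+i:ℕ):ℝ) - X))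

/-- The Diophantine property for `d > N`:
`K̂_n^{(1,d)}(x;p,N) = (x−N+1)_N K̂_n^{(2,d−N−1)}(x;p,N)`. -/
theorem krawtchouk_exceptional_diophantine_d_large (N : ℕ) (hN : 1 ≤ N) (p : ℝ)
    (d n : ℕ) (hd : N < d) (hnd : n ≠ d) :
    xkraw1 d n p (N : ℝ) =
      (∏ i ∈ Finset.range N, (Polynomial.X - Polynomial.C ((N : ℝ) - 1 - i))) *
        xkraw2 (d - N - 1) n p (N : ℝ) := by
  obtain ⟨m, rfl⟩ : ∃ m, d = N + 1 + m := ⟨d - N - 1, by omega⟩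
  have hm : N + 1 + m - N - 1 = m := by omega
  have hP : (∏ i ∈ Finset.range N, (X - C ((N:ℝ) - 1 - i)))
      = ∏ i ∈ Finset.range N, (X - C (i:ℝ)) := by
    rw [← Finset.prod_range_reflect (fun i => X - C (i:ℝ)) N]
    apply Finset.prod_congr rfl
    intro i hi
    rw [Finset.mem_range] at hi
    congr 1
    have h1 : i ≤ N - 1 := by omega
    rw [Nat.cast_sub h1, Nat.cast_sub hN]
    norm_num
  have hb : ∏ i ∈ Finset.range (N+1), (X - C (i:ℝ))
      = (X - C ((N:ℝ))) * ∏ i ∈ Finset.range N, (X - C (i:ℝ)) := by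
    rw [Finset.prod_range_succ]; ring
  have hb1 : (∏ i ∈ Finset.range (N+1), (X - C (i:ℝ))).comp (X + 1)
      = (X + 1) * ∏ i ∈ Finset.range N, (X - C (i:ℝ)) := by
    rw [Polynomial.prod_comp]
    have : ∀ i : ℕ, (X - C ((i:ℕ):ℝ)).comp (X + 1) = X + 1 - C (i:ℝ) := by
      intro i; simp [sub_comp]
    simp only [this]
    rw [Finset.prod_range_succ']
    have h0 : (X : Polynomial ℝ) + 1 - C ((0:ℕ):ℝ) = X + 1 := by simp
    rw [h0]
    have h1 : ∀ i ∈ Finset.range N, (X : Polynomial ℝ) + 1 - C ((i+1 : ℕ):ℝ) = X - C (i:ℝ) := by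
      intro i _
      push_cast [Polynomial.C_add, Polynomial.C_1]
      ring
    rw [Finset.prod_congr rfl h1]
    ring
  have hq : ((kraw m p (-(N:ℝ)-2)).comp (X - C ((N:ℝ)+1))).comp (X + 1)
      = (kraw m p (-(N:ℝ)-2)).comp (X - C ((N:ℝ))) := by
    rw [Polynomial.comp_assoc]
    congr 1
    rw [sub_comp, X_comp, C_comp, Polynomial.C_add, Polynomial.C_1]
    ring
  have hc : (1:ℝ) / ((N:ℝ) + (m:ℕ) + 1 - (n:ℕ)) = -(1 / ((n:ℕ) - ((N+1+m : ℕ):ℝ))) := by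
    push_cast
    rw [show (N:ℝ) + (m:ℝ) + 1 - (n:ℝ) = -((n:ℝ) - ((N:ℝ) + 1 + (m:ℝ))) by ring, div_neg]
  unfold xkraw1 xkraw2
  rw [hm, kraw_factor N m p, hP, mul_comp, hb1, hq, hc, map_neg, hb]
  ring
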